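/- In the semigroup F generated by the automaton I, the equality f_n⁵ = f_n³ holds for all n ≥ 1, and f_n⁴ = f_n² holds for n ≤ 4. -/
import Mathlib


/-- The transformation of `{0,1}*` given by the state `s` of the automaton `I`:
it flips the first letter (`φ(s) = ⟨e,e⟩σ`).  Letters: `false = 0`, `true = 1`. -/
def sAct : List Bool → List Bool
  | [] => []
  | a :: w => (!a) :: w

/-- The transformation of `{0,1}*` given by the state `f` of the automaton `I`
(`φ(f) = ⟨s,f⟩ζ`): `0w ↦ 0·w^s` and `1w ↦ 0·w^f`. -/
def fAct : List Bool → List Bool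
  | [] => []
  | false :: w => false :: sAct w
  | true :: w => false :: fAct w

/-- The elements `f_n` of the semigroup: `f₁ = s`, `f₂ = f`,
`f_n = f_{n-2} f_{n-1}` (products written left-to-right). -/
def fA : ℕ → List Bool → List Bool
  | 0 => id
  | 1 => sAct
  | 2 => fAct
  | (n + 3) => fun w => fA (n + 2) (fA (n + 1) w)

/-- The left-to-right product `f_{i₁} f_{i₂} ⋯ f_{i_k}` of the elements `f_i`
along a list of indices. -/
def prodL (l : List ℕ) (w : List Bool) : List Bool :=
  l.foldl (fun v i => fA i v) w

/-- Membership in the semigroup `F` generated by `s` and `f`: `g` is a nonempty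
product of the generators (`false` stands for the generator `s`, `true` for `f`;
products are written left-to-right). -/
def inF (g : List Bool → List Bool) : Prop :=
  ∃ u : List Bool, u ≠ [] ∧
    (fun w => u.foldl (fun v a => if a then fAct v else sAct v) w) = g

/-! ### Auxiliary material -/

/-- The sections `t_n = f_n|₁`:  `t₂ = f`, `t₃ = s`, `t_{n+2} = f_n ∘ t_n`. -/
def tA : ℕ → List Bool → List Bool
  | 0 => id
  | 1 => id
  | 2 => fAct
  | 3 => sAct
  | (n + 4) => fun w => fA (n + 2) (tA (n + 2) w)

lemma sAct_sAct (w : List Bool) : sAct (sAct w) = w := by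
  cases w with
  | nil => rfl
  | cons a w => cases a <;> rfl

lemma fAct3 (w : List Bool) : fAct (fAct (fAct w)) = fAct w := by
  cases w with
  | nil => rfl
  | cons a w =>
    cases a
    · show fAct (fAct (false :: sAct w)) = _
      show fAct (false :: sAct (sAct w)) = _
      rw [sAct_sAct]
    · show fAct (fAct (false :: fAct w)) = _
      show fAct (false :: sAct (fAct w)) = _
      show false :: sAct (sAct (fAct w)) = _
      rw [sAct_sAct]
      rfl

lemma fA_nil : ∀ n, fA n [] = [] := by
  intro n
  induction n using Nat.strong_induction_on with
  | _ n ih =>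
    match n with
    | 0 => rfl
    | 1 => rfl
    | 2 => rfl
    | (m + 3) =>
      show fA (m + 2) (fA (m + 1) []) = []
      rw [ih (m + 1) (by omega), ih (m + 2) (by omega)]

lemma tA_nil : ∀ n, tA n [] = [] := by
  intro n
  induction n using Nat.strong_induction_on with
  | _ n ih =>
    match n with
    | 0 => rfl
    | 1 => rfl
    | 2 => rfl
    | 3 => rfl
    | (m + 4) =>
      show fA (m + 2) (tA (m + 2) []) = []
      rw [ih (m + 2) (by omega), fA_nil]

/-- The wreath recursion of `f_{n}`, `n ≥ 2`:  `f_n(0w) = 0·f_{n-1}(w)` and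
`f_n(1w) = 0·t_n(w)`. -/
lemma fA_cons : ∀ n (a : Bool) (w : List Bool),
    fA (n + 2) (a :: w) = false :: (bif a then tA (n + 2) w else fA (n + 1) w) := by
  intro n
  induction n using Nat.strong_induction_on with
  | _ n ih =>
    match n with
    | 0 => intro a w; cases a <;> rfl
    | 1 => intro a w; cases a <;> rfl
    | (m + 2) =>
      intro a w
      show fA (m + 3) (fA (m + 2) (a :: w)) = _
      rw [ih m (by omega) a w, ih (m + 1) (by omega) false _]
      cases a <;> rfl

lemma fA_iter_cons : ∀ (k n : ℕ) (a : Bool) (w : List Bool),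
    (fA (n + 2))^[k + 1] (a :: w)
      = false :: (fA (n + 1))^[k] (bif a then tA (n + 2) w else fA (n + 1) w) := by
  intro k
  induction k with
  | zero => intro n a w; simpa using fA_cons n a w
  | succ k ih =>
    intro n a w
    rw [Function.iterate_succ_apply, fA_cons n a w, ih n false _]
    simp only [Bool.cond_false]
    rw [← Function.iterate_succ_apply]

lemma fA_iter_nil (n k : ℕ) : (fA n)^[k] [] = [] :=
  Function.iterate_fixed (fA_nil n) k

/-- `f₄ f² = f₄` (as transformations; products left-to-right means
`fA 4 (fAct (fAct v)) = fA 4 v`). -/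
lemma fA4_ff (v : List Bool) : fA 4 (fAct (fAct v)) = fA 4 v := by
  show fA 3 (fA 2 (fAct (fAct v))) = fA 3 (fA 2 v)
  show fA 3 (fAct (fAct (fAct v))) = _
  rw [fAct3]
  rfl

/-- `f₃³ = f₃` on words starting with `0`. -/
lemma fA3_cube_zero (u : List Bool) :
    fA 3 (fA 3 (fA 3 (false :: u))) = fA 3 (false :: u) := by
  have h : ∀ v, fA 3 (false :: v) = false :: fAct v := fun v => by
    rw [fA_cons 1 false v]; rfl
  rw [h, h, h, fAct3]

/-- Words in the image of `fAct` start with `0` (or are empty). -/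
lemma fAct_shape (w : List Bool) : fAct w = [] ∨ ∃ u, fAct w = false :: u := by
  cases w with
  | nil => exact Or.inl rfl
  | cons a w => cases a <;> exact Or.inr ⟨_, rfl⟩

lemma fA_shape (n : ℕ) (w : List Bool) :
    fA (n + 2) w = [] ∨ ∃ u, fA (n + 2) w = false :: u := by
  cases w with
  | nil => exact Or.inl (fA_nil _)
  | cons a w => exact Or.inr ⟨_, fA_cons n a w⟩

/-- `f₃⁴ = f₃²`. -/
lemma fA3_rel (v : List Bool) : (fA 3)^[4] v = (fA 3)^[2] v := by
  cases v with
  | nil => rw [fA_iter_nil, fA_iter_nil]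
  | cons a w =>
    rw [show (4 : ℕ) = 3 + 1 from rfl, show (2 : ℕ) = 1 + 1 from rfl,
      fA_iter_cons 3 1 a w, fA_iter_cons 1 1 a w]
    show false :: fAct (fAct (fAct _)) = false :: fAct _
    rw [fAct3]

/-- `f₄⁴ = f₄²`. -/
lemma fA4_rel (v : List Bool) : (fA 4)^[4] v = (fA 4)^[2] v := by
  cases v with
  | nil => rw [fA_iter_nil, fA_iter_nil]
  | cons a w =>
    rw [show (4 : ℕ) = 3 + 1 from rfl, show (2 : ℕ) = 1 + 1 from rfl,
      fA_iter_cons 3 2 a w, fA_iter_cons 1 2 a w]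
    congr 1
    show fA 3 (fA 3 (fA 3 _)) = fA 3 _
    have hX : (bif a then tA 4 w else fA 3 w) = []
        ∨ ∃ u, (bif a then tA 4 w else fA 3 w) = false :: u := by
      cases a
      · exact fA_shape 1 w
      · show fAct (fAct w) = [] ∨ _
        exact fAct_shape (fAct w)
    rcases hX with h | ⟨u, h⟩
    · rw [h, fA_nil, fA_nil, fA_nil]
    · rw [h, fA3_cube_zero]

/-- `f_n⁴ = f_n²` on words starting with `0`, provided `f_{n-1}⁴ = f_{n-1}²`
on the tail. -/
lemma iter_step (n : ℕ) (u : List Bool)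
    (h : (fA (n + 1 + 2))^[4] u = (fA (n + 1 + 2))^[2] u) :
    (fA (n + 2 + 2))^[4] (false :: u) = (fA (n + 2 + 2))^[2] (false :: u) := by
  rw [show (4 : ℕ) = 3 + 1 from rfl, show (2 : ℕ) = 1 + 1 from rfl,
    fA_iter_cons 3 (n + 2) false u, fA_iter_cons 1 (n + 2) false u]
  show false :: (fA (n + 3))^[3] (fA (n + 3) u) = false :: (fA (n + 3))^[1] (fA (n + 3) u)
  rw [← Function.iterate_succ_apply, ← Function.iterate_succ_apply]
  exact congrArg _ h

/-- Wreath recursion of the sections, `n ≥ 6`: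
`t_n(0w) = 0·t_{n-1}(w^s)` and `t_n(1w) = 0·t_{n-1}(w^f)`. -/
lemma tA_cons : ∀ n (a : Bool) (w : List Bool),
    tA (n + 6) (a :: w) = false :: tA (n + 5) (bif a then fAct w else sAct w) := by
  intro n
  induction n using Nat.strong_induction_on with
  | _ n ih =>
    match n with
    | 0 =>
      intro a w
      show fA 4 (fA 2 (fA 2 (a :: w))) = _
      cases a
      · show fA 4 (fAct (fAct (false :: w))) = false :: tA 5 (sAct w)
        show fA 4 (fAct (false :: sAct w)) = _
        show fA 4 (false :: sAct (sAct w)) = _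
        rw [sAct_sAct, fA_cons 2 false w]
        show _ = false :: fA 3 (sAct (sAct w))
        rw [sAct_sAct]
        rfl
      · show fA 4 (fAct (fAct (true :: w))) = false :: tA 5 (fAct w)
        show fA 4 (fAct (false :: fAct w)) = _
        show fA 4 (false :: sAct (fAct w)) = _
        rw [fA_cons 2 false _]
        rfl
    | 1 =>
      intro a w
      show fA 5 (tA 5 (a :: w)) = _
      cases a
      · show fA 5 (fA 3 (sAct (false :: w))) = false :: tA 6 (sAct w)
        show fA 5 (fA 3 (true :: w)) = _
        rw [fA_cons 1 true w]
        show fA 5 (false :: sAct w) = _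
        rw [fA_cons 3 false _]
        show false :: fA 4 (sAct w) = false :: fA 4 (fAct (fAct (sAct w)))
        rw [fA4_ff]
      · show fA 5 (fA 3 (sAct (true :: w))) = false :: tA 6 (fAct w)
        show fA 5 (fA 3 (false :: w)) = _
        rw [fA_cons 1 false w]
        show fA 5 (false :: fAct w) = _
        rw [fA_cons 3 false _]
        show false :: fA 4 (fAct w) = false :: fA 4 (fAct (fAct (fAct w)))
        rw [fAct3]
    | (m + 2) =>
      intro a w
      show fA (m + 6) (tA (m + 6) (a :: w)) = _
      rw [ih m (by omega) a w, fA_cons (m + 4) false _]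
      rfl

/-- The key auxiliary relation `E(n)`: `f_n⁴ t_n = f_n² t_n` for all `n ≥ 2`. -/
lemma E_rel : ∀ n (w : List Bool),
    (fA (n + 2))^[4] (tA (n + 2) w) = (fA (n + 2))^[2] (tA (n + 2) w) := by
  intro n
  induction n using Nat.strong_induction_on with
  | _ n ih =>
    match n with
    | 0 =>
      intro w
      show fAct (fAct (fAct (fAct (fAct w)))) = fAct (fAct (fAct w))
      rw [fAct3, fAct3]
    | 1 => intro w; exact fA3_rel _
    | 2 => intro w; exact fA4_rel _
    | 3 =>
      intro w
      show (fA 5)^[4] (fA 3 (sAct w)) = (fA 5)^[2] (fA 3 (sAct w))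
      rcases fA_shape 1 (sAct w) with h | ⟨u, h⟩
      · rw [h, fA_iter_nil, fA_iter_nil]
      · rw [h]; exact iter_step 1 u (fA4_rel u)
    | (m + 4) =>
      intro w
      cases w with
      | nil => rw [tA_nil, fA_iter_nil, fA_iter_nil]
      | cons a w =>
        rw [tA_cons m a w]
        exact iter_step (m + 2) _ (ih (m + 3) (by omega) _)

/-- The key auxiliary relation `B(n)`: `f_n f_{n-1}³ = f_n f_{n-1}`
(left-to-right products) for all `n ≥ 2`. -/
lemma B_rel : ∀ n (w : List Bool),
    (fA (n + 1))^[3] (fA (n + 2) w) = fA (n + 1) (fA (n + 2) w) := by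
  intro n
  induction n using Nat.strong_induction_on with
  | _ n ih =>
    match n with
    | 0 =>
      intro w
      show sAct (sAct (sAct (fAct w))) = sAct (fAct w)
      rw [sAct_sAct]
    | 1 =>
      intro w
      show fAct (fAct (fAct (fA 3 w))) = fAct (fA 3 w)
      exact fAct3 _
    | (m + 2) =>
      intro w
      cases w with
      | nil => rw [fA_nil, fA_iter_nil, fA_nil]
      | cons a w =>
        rw [fA_cons (m + 2) a w,
          show (3 : ℕ) = 2 + 1 from rfl, fA_iter_cons 2 (m + 1) false _,
          fA_cons (m + 1) false _]
        congr 1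
        show (fA (m + 2))^[2] (fA (m + 2) _) = _
        rw [← Function.iterate_succ_apply]
        cases a
        · exact ih (m + 1) (by omega) w
        · show (fA (m + 2))^[3] (tA (m + 4) w) = fA (m + 2) (tA (m + 4) w)
          show (fA (m + 2))^[3] (fA (m + 2) (tA (m + 2) w))
              = fA (m + 2) (fA (m + 2) (tA (m + 2) w))
          rw [← Function.iterate_succ_apply]
          exact E_rel m w

/-- The main relation `A(n)`: `f_n⁵ = f_n³` for all `n ≥ 1`. -/
lemma A_rel : ∀ n (w : List Bool), (fA (n + 1))^[5] w = (fA (n + 1))^[3] w := by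
  intro n
  induction n using Nat.strong_induction_on with
  | _ n ih =>
    match n with
    | 0 =>
      intro w
      show sAct (sAct (sAct (sAct (sAct w)))) = sAct (sAct (sAct w))
      rw [sAct_sAct]
    | 1 =>
      intro w
      show fAct (fAct (fAct (fAct (fAct w)))) = fAct (fAct (fAct w))
      rw [fAct3, fAct3]
    | (m + 2) =>
      intro w
      cases w with
      | nil => rw [fA_iter_nil, fA_iter_nil]
      | cons a w =>
        rw [show (5 : ℕ) = 4 + 1 from rfl, show (3 : ℕ) = 2 + 1 from rfl,
          fA_iter_cons 4 (m + 1) a w, fA_iter_cons 2 (m + 1) a w]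
        congr 1
        cases a
        · show (fA (m + 2))^[4] (fA (m + 2) w) = (fA (m + 2))^[2] (fA (m + 2) w)
          rw [← Function.iterate_succ_apply, ← Function.iterate_succ_apply]
          exact ih (m + 1) (by omega) w
        · show (fA (m + 2))^[4] (tA (m + 3) w) = (fA (m + 2))^[2] (tA (m + 3) w)
          match m with
          | 0 =>
            show fAct (fAct (fAct (fAct (sAct w)))) = fAct (fAct (sAct w))
            conv_lhs => rw [fAct3]
          | (k + 1) =>
            show (fA (k + 3))^[4] (fA (k + 2) (tA (k + 2) w))
                = (fA (k + 3))^[2] (fA (k + 2) (tA (k + 2) w))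
            have h1 : fA (k + 3) (fA (k + 2) (tA (k + 2) w)) = fA (k + 4) (tA (k + 2) w) := rfl
            rw [show (4 : ℕ) = 3 + 1 from rfl, show (2 : ℕ) = 1 + 1 from rfl,
              Function.iterate_succ_apply, Function.iterate_succ_apply, h1]
            show (fA (k + 2 + 1))^[3] (fA (k + 2 + 2) _) = _
            rw [B_rel (k + 2)]
            rfl

/-- In `F`, `f_n⁵ = f_n³` holds for all `n ≥ 1`, and `f_n⁴ = f_n²` holds
for `n ≤ 4`. -/
theorem fn_power_relations :
    (∀ n : ℕ, 1 ≤ n → ∀ w : List Bool, (fA n)^[5] w = (fA n)^[3] w) ∧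
    (∀ n : ℕ, 1 ≤ n → n ≤ 4 → ∀ w : List Bool, (fA n)^[4] w = (fA n)^[2] w) := by
  constructor
  · rintro (_ | n) h w
    · omega
    · exact A_rel n w
  · intro n h1 h4 w
    interval_cases n
    · show sAct (sAct (sAct (sAct w))) = sAct (sAct w)
      rw [sAct_sAct]
    · show fAct (fAct (fAct (fAct w))) = fAct (fAct w)
      rw [fAct3]
    · exact fA3_rel w
    · exact fA4_rel w
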